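/- arXiv:2206.05421 — 3 statements merged into one kernel-verified Lean document; each statement's English description precedes it below -/
import Mathlib

section
/- Let P be a graphoid over V, and let π, τ be permutations of the vertices such that τ is obtained from π by swapping two adjacent entries j and k (with j immediately before k in π). Then the induced DAGs satisfy G_π = G_τ if and only if X_j is independent of X_k given the variables preceding j in π. -/
open Classical
attribute [local instance] Classical.propDecidable

variable {V : Type} [Fintype V] [DecidableEq V]

/-- A conditional independence model over variable set `V`:
`I A B C` means `A` is independent of `B` given `C`. -/
abbrev IndepModel (V : Type) :=
  Finset V → Finset V → Finset V → Prop

/-- Semigraphoid axioms. -/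
structure Semigraphoid (I : IndepModel V) : Prop where
  symm : ∀ A B C, I A B C → I B A C
  decomposition : ∀ A B W C, I A (B ∪ W) C → I A B C ∧ I A W C
  weakUnion : ∀ A B W C, I A (B ∪ W) C → I A B (C ∪ W)
  contraction : ∀ A B W C, I A B C → I A W (C ∪ B) → I A (B ∪ W) C

/-- Graphoid axioms. -/
structure Graphoid (I : IndepModel V) extends Semigraphoid I : Prop where
  intersection : ∀ A B W C, I A B (C ∪ W) → I A W (C ∪ B) → I A (B ∪ W) C

/-- Compositional graphoid axioms. -/
structure CompGraphoid (I : IndepModel V) extends Graphoid I : Prop where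
  composition : ∀ A B W C, I A B C → I A W C → I A (B ∪ W) C

/-- `M` is a Markov blanket of `X` relative to `Z`. -/
def MarkovBlanket (I : IndepModel V) (X : V) (Z M : Finset V) : Prop :=
  M ⊆ Z ∧ I {X} (Z \ M) M

/-- `M` is a Markov boundary (minimal Markov blanket) of `X` relative to `Z`. -/
def MarkovBoundary (I : IndepModel V) (X : V) (Z M : Finset V) : Prop :=
  MarkovBlanket I X Z M ∧ ∀ M' ⊂ M, ¬ I {X} (Z \ M') M'

/-- A directed graph on `V`, given by its finite set of directed edges. -/
abbrev EdgeSet (V : Type) := Finset (V × V)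

def Adj (E : EdgeSet V) (a b : V) : Prop := (a, b) ∈ E

/-- Acyclicity: no vertex reaches itself by a nontrivial directed path. -/
def IsDAG (E : EdgeSet V) : Prop := ∀ v, ¬ Relation.TransGen (Adj E) v v

def parents (E : EdgeSet V) (v : V) : Finset V :=
  (E.filter (fun e => e.2 = v)).image Prod.fst

def IsCollider (E : EdgeSet V) (x y z : V) : Prop := Adj E x y ∧ Adj E z y

/-- The middle vertex `y` of a path triple `x - y - z` does not block the path
given conditioning set `C`. -/
def ActiveTriple (E : EdgeSet V) (C : Finset V) (x y z : V) : Prop :=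
  (IsCollider E x y z ∧ ∃ d ∈ C, Relation.ReflTransGen (Adj E) y d) ∨
  (¬ IsCollider E x y z ∧ y ∉ C)

/-- `a` and `b` are d-connected given `C` in the graph `E`. -/
def DConn (E : EdgeSet V) (C : Finset V) (a b : V) : Prop :=
  ∃ p : List V, 2 ≤ p.length ∧ p.head? = some a ∧ p.getLast? = some b ∧
    (∀ (i : ℕ) (h : i + 1 < p.length),
      Adj E (p.get ⟨i, by omega⟩) (p.get ⟨i + 1, h⟩) ∨
      Adj E (p.get ⟨i + 1, h⟩) (p.get ⟨i, by omega⟩)) ∧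
    (∀ (i : ℕ) (h : i + 2 < p.length),
      ActiveTriple E C (p.get ⟨i, by omega⟩) (p.get ⟨i + 1, by omega⟩) (p.get ⟨i + 2, h⟩))

/-- `A` and `B` are d-separated given `C`. -/
def DSep (E : EdgeSet V) (A B C : Finset V) : Prop :=
  ∀ a ∈ A, ∀ b ∈ B, ¬ DConn E C a b

def PairwiseDisjoint3 (A B C : Finset V) : Prop :=
  Disjoint A B ∧ Disjoint A C ∧ Disjoint B C

/-- `I(G) ⊆ I(P)`: every d-separation of the graph is an independence of `I`. -/
def Markovian (E : EdgeSet V) (I : IndepModel V) : Prop :=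
  ∀ A B C, PairwiseDisjoint3 A B C → DSep E A B C → I A B C

/-- `I(P) ⊆ I(G)`: every independence of `I` is a d-separation of the graph. -/
def FaithfulTo (E : EdgeSet V) (I : IndepModel V) : Prop :=
  ∀ A B C, PairwiseDisjoint3 A B C → I A B C → DSep E A B C

/-- `I(E) ⊆ I(E')` : every d-separation statement of `E` holds in `E'`. -/
def ISub (E E' : EdgeSet V) : Prop :=
  ∀ A B C, PairwiseDisjoint3 A B C → DSep E A B C → DSep E' A B C

/-- Markov equivalence: same d-separation statements. -/
def MEquiv (E E' : EdgeSet V) : Prop := ISub E E' ∧ ISub E' E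

/-- Markovian DAGs. -/
def CMC (I : IndepModel V) : Set (EdgeSet V) := {G | IsDAG G ∧ Markovian G I}

/-- Faithful DAGs. -/
def CFC (I : IndepModel V) : Set (EdgeSet V) := {G | G ∈ CMC I ∧ FaithfulTo G I}

/-- SGS-minimal DAGs: Markovian with no Markovian proper subgraph. -/
def SGSmin (I : IndepModel V) : Set (EdgeSet V) :=
  {G | G ∈ CMC I ∧ ∀ G' ⊆ G, G' ∈ CMC I → G' = G}

/-- Frugal DAGs: Markovian with minimal edge count. -/
def Fr (I : IndepModel V) : Set (EdgeSet V) :=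
  {G | G ∈ CMC I ∧ ∀ G' ∈ CMC I, G.card ≤ G'.card}

/-- Uniquely frugal DAGs. -/
def uFr (I : IndepModel V) : Set (EdgeSet V) :=
  {G | G ∈ Fr I ∧ ∀ G' ∈ Fr I, MEquiv G' G}

/-- P-minimal DAGs: Markovian `G` such that no Markovian `G'` has `I(G) ⊊ I(G')`. -/
def Pm (I : IndepModel V) : Set (EdgeSet V) :=
  {G | G ∈ CMC I ∧ ∀ G' ∈ CMC I, ISub G G' → ISub G' G}

/-- Uniquely P-minimal DAGs. -/
def uPm (I : IndepModel V) : Set (EdgeSet V) :=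
  {G | G ∈ Pm I ∧ ∀ G' ∈ Pm I, MEquiv G' G}

/-- A list is a permutation of the vertices of `V`. -/
def IsPermList (π : List V) : Prop := π.Nodup ∧ ∀ v : V, v ∈ π

/-- The set of vertices preceding `k` in the permutation `π`. -/
def pre (π : List V) (k : V) : Finset V := (π.takeWhile (fun x => x != k)).toFinset

/-- The DAG induced from a permutation `π` by the Raskutti–Uhler (RU) construction:
`j → k` is an edge iff `j` precedes `k` in `π` and `X_j` is dependent on `X_k`
given all other predecessors of `k`. -/
noncomputable def RUedges (I : IndepModel V) (π : List V) : EdgeSet V :=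
  Finset.univ.filter
    (fun e => e.1 ∈ pre π e.2 ∧ ¬ I {e.1} {e.2} ((pre π e.2).erase e.1))

/-- `j → k` is a covered edge of `E`. -/
def CoveredEdge (E : EdgeSet V) (j k : V) : Prop :=
  (j, k) ∈ E ∧ parents E j = (parents E k).erase j

/-- `j → k` is a singular edge of `E`: no directed path from `j` to `k` other than
the edge itself. -/
def SingularEdge (E : EdgeSet V) (j k : V) : Prop :=
  (j, k) ∈ E ∧
    ∀ i, Relation.TransGen (Adj E) j i → Relation.TransGen (Adj E) i k → i = j ∨ i = k

/-- `π` is a causal order of the graph `E`: every ancestor of a vertex precedes it. -/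
def CausalOrder (E : EdgeSet V) (π : List V) : Prop :=
  IsPermList π ∧ ∀ a b, Relation.TransGen (Adj E) a b → π.idxOf a < π.idxOf b

/-- Two permutations differ by one adjacent transposition. -/
def AdjTrans (π τ : List V) : Prop :=
  ∃ (δ₁ δ₂ : List V) (a b : V), π = δ₁ ++ a :: b :: δ₂ ∧ τ = δ₁ ++ b :: a :: δ₂

/-- The non-descendants of `j` in the graph `E`. -/
noncomputable def nonDesc (E : EdgeSet V) (j : V) : Finset V :=
  Finset.univ.filter (fun i => ¬ Relation.ReflTransGen (Adj E) j i)

/-!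
The RU parents of a vertex `b` are determined by the set `pre π b` of its predecessors, and swapping
`j` and `k` changes that set only for `b = j` and `b = k`. The edge `j → k` of `G_π` is present
exactly when `X_j` and `X_k` are dependent given `pre π j`, and it has no counterpart in `G_τ`.
Conversely, if `X_j ⊥ X_k` given `pre π j`, then adding `k` to the conditioning set of every other
candidate parent `a` of `j` does not change whether `X_a ⊥ X_j`: contraction and weak union give one
direction, intersection and decomposition the other (the same holds with `j` and `k` exchanged).
-/

section

omit [Fintype V]

theorem pre_cons (a v : V) (l : List V) :
    pre (a :: l) v = if a = v then ∅ else insert a (pre l v) := by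
  by_cases h : a = v <;> simp [pre, h]

theorem pre_append_of_not_mem {l₁ : List V} (l₂ : List V) {v : V} (h : v ∉ l₁) :
    pre (l₁ ++ l₂) v = l₁.toFinset ∪ pre l₂ v := by
  induction l₁ with
  | nil => simp [pre]
  | cons a t ih =>
    simp only [List.mem_cons, not_or] at h
    rw [List.cons_append, pre_cons, if_neg (Ne.symm h.1), ih h.2]
    simp [Finset.insert_union]

theorem pre_append_cons_self {l₁ : List V} (l₂ : List V) {a : V} (h : a ∉ l₁) :
    pre (l₁ ++ a :: l₂) a = l₁.toFinset := by
  rw [pre_append_of_not_mem _ h, pre_cons, if_pos rfl, Finset.union_empty]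

theorem pre_append_cons_cons {l₁ : List V} (l₂ : List V) {a b : V} (h : b ∉ l₁) (hab : a ≠ b) :
    pre (l₁ ++ a :: b :: l₂) b = insert a l₁.toFinset := by
  rw [pre_append_of_not_mem _ h, pre_cons, if_neg hab, pre_cons, if_pos rfl,
    Finset.union_insert, Finset.union_empty]

theorem pre_append_swap_of_ne (l₁ l₂ : List V) {a b v : V} (ha : a ≠ v) (hb : b ≠ v) :
    pre (l₁ ++ a :: b :: l₂) v = pre (l₁ ++ b :: a :: l₂) v := by
  induction l₁ with
  | nil => simp only [List.nil_append, pre_cons, if_neg ha, if_neg hb, Finset.insert_comm]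
  | cons c t ih => rw [List.cons_append, List.cons_append, pre_cons, pre_cons, ih]

theorem Graphoid.indep_union_right_iff {I : IndepModel V} (hG : Graphoid I)
    {A B W C : Finset V} (hW : I A W (C ∪ B)) : I A B (C ∪ W) ↔ I A B C :=
  ⟨fun h => (hG.decomposition A B W C (hG.intersection A B W C h hW)).1,
    fun h => hG.weakUnion A B W C (hG.contraction A B W C h hW)⟩

theorem Graphoid.ru_parent_insert_iff {I : IndepModel V} (hG : Graphoid I) {D : Finset V}
    {a b k : V} (hkD : k ∉ D) (hbk : I {b} {k} D) :
    (a ∈ insert k D ∧ ¬ I {a} {b} ((insert k D).erase a)) ↔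
      (a ∈ D ∧ ¬ I {a} {b} (D.erase a)) := by
  have hsymm : ∀ S, I {a} {b} S ↔ I {b} {a} S :=
    fun S => ⟨hG.symm _ _ _, hG.symm _ _ _⟩
  rcases eq_or_ne a k with rfl | hak
  · simp only [Finset.erase_insert hkD, hsymm, hkD, false_and, iff_false, not_and, not_not]
    exact fun _ => hbk
  by_cases haD : a ∈ D
  · have hk : I {b} {k} (D.erase a ∪ {a}) := by
      rwa [Finset.union_comm, ← Finset.insert_eq, Finset.insert_erase haD]
    have hcond : (insert k D).erase a = D.erase a ∪ {k} := by
      rw [Finset.erase_insert_of_ne hak.symm, Finset.insert_eq, Finset.union_comm]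
    rw [hcond, hsymm, hsymm, hG.indep_union_right_iff hk]
    simp [hak, haD]
  · simp [hak, haD]

end

theorem mem_RUedges {I : IndepModel V} {π : List V} {a b : V} :
    (a, b) ∈ RUedges I π ↔ a ∈ pre π b ∧ ¬ I {a} {b} ((pre π b).erase a) := by
  simp [RUedges]

/-- swapping two adjacent entries `j, k` of a permutation preserves the
RU-induced DAG iff `X_j ⊥ X_k` given the predecessors of `j`. -/
theorem adjacent_transposition_iff (I : IndepModel V) (hG : Graphoid I)
    (j k : V) (δ₁ δ₂ : List V) (π τ : List V)
    (hπ : π = δ₁ ++ j :: k :: δ₂) (hτ : τ = δ₁ ++ k :: j :: δ₂)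
    (hperm : IsPermList π) :
    (RUedges I π = RUedges I τ ↔ I {j} {k} (pre π j)) := by
  subst hπ hτ
  have hdisj := List.disjoint_of_nodup_append hperm.1
  have hj₁ : j ∉ δ₁ := fun h => hdisj h List.mem_cons_self
  have hk₁ : k ∉ δ₁ := fun h => hdisj h (by simp)
  have hjk : j ≠ k := fun h => (List.nodup_cons.mp (hperm.1.of_append_right)).1 (by simp [h])
  have hjD : j ∉ δ₁.toFinset := by simpa using hj₁
  have hkD : k ∉ δ₁.toFinset := by simpa using hk₁
  rw [pre_append_cons_self _ hj₁]
  constructor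
  · intro hEq
    have hjk_mem := congrArg ((j, k) ∈ ·) hEq
    simp only [mem_RUedges, pre_append_cons_cons _ hk₁ hjk, pre_append_cons_self _ hk₁,
      Finset.erase_insert hjD] at hjk_mem
    by_contra hI
    simp [hI, hjD] at hjk_mem
  · intro hI
    ext ⟨a, b⟩
    rw [mem_RUedges, mem_RUedges]
    rcases eq_or_ne b j with rfl | hbj
    · rw [pre_append_cons_self _ hj₁, pre_append_cons_cons _ hj₁ hjk.symm]
      exact (hG.ru_parent_insert_iff hkD hI).symm
    rcases eq_or_ne b k with rfl | hbk
    · rw [pre_append_cons_self _ hk₁, pre_append_cons_cons _ hk₁ hjk]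
      exact hG.ru_parent_insert_iff hjD (hG.symm _ _ _ hI)
    rw [pre_append_swap_of_ne _ _ hbj.symm hbk.symm]
end

section
/- For any independence model I over a finite variable set V with at least 2 variables, and any triple ⟨X_i, X_j | X_K⟩ ∈ I with i ≠ j and K ⊆ V \ {X_i, X_j}, there exists a DAG G over V such that the set of d-separation statements of G between pairs of singletons is exactly {⟨X_i, X_j | X_K⟩} (together with its symmetric counterpart). -/
open Classical
attribute [local instance] Classical.propDecidable

variable {V : Type} [Fintype V] [DecidableEq V]

/-! In `singleCIDAG i j K` every pair other than `{i, j}` is adjacent, so it is never separated.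
The vertices `i` and `j` are joined through each `k ∈ K` by a chain `i → k → j` and through each
other vertex `c` by a collider `i → c ← j`, so conditioning on any set other than `K` opens one of
these paths. Given `K`, the vertices after `j` form a child-closed set disjoint from `K`, hence
contain no activated collider: an active path entering `j` from there can be traced back inside
this set and never reaches `i`, while a path entering `j` from `K` is blocked at its last step. -/

section DSeparation

variable {V : Type} {E : EdgeSet V} {C : Finset V}

theorem dconn_iff {a b : V} : DConn E C a b ↔ ∃ p : List V, 2 ≤ p.length ∧ p.head? = some a ∧
    p.getLast? = some b ∧
    (∀ (t : ℕ) (h : t + 1 < p.length), Adj E p[t] p[t + 1] ∨ Adj E p[t + 1] p[t]) ∧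
    (∀ (t : ℕ) (h : t + 2 < p.length), ActiveTriple E C p[t] p[t + 1] p[t + 2]) :=
  Iff.rfl

theorem ActiveTriple.symm {x y z : V} (h : ActiveTriple E C x y z) : ActiveTriple E C z y x := by
  unfold ActiveTriple IsCollider at *
  rwa [and_comm (a := Adj E z y)]

theorem DConn.symm {a b : V} (h : DConn E C a b) : DConn E C b a := by
  obtain ⟨p, hlen, hh, hl, hadj, htri⟩ := dconn_iff.mp h
  have hn : p.reverse.length = p.length := List.length_reverse
  refine dconn_iff.mpr ⟨p.reverse, by omega, by rwa [List.head?_reverse],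
    by rwa [List.getLast?_reverse], fun t ht => ?_, fun t ht => ?_⟩
  · have e₁ : p.length - 1 - t = p.length - 2 - t + 1 := by omega
    have e₂ : p.length - 1 - (t + 1) = p.length - 2 - t := by omega
    simp only [List.getElem_reverse, e₁, e₂]
    exact (hadj (p.length - 2 - t) (by omega)).symm
  · have e₁ : p.length - 1 - t = p.length - 3 - t + 2 := by omega
    have e₂ : p.length - 1 - (t + 1) = p.length - 3 - t + 1 := by omega
    have e₃ : p.length - 1 - (t + 2) = p.length - 3 - t := by omega
    simp only [List.getElem_reverse, e₁, e₂, e₃]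
    exact (htri (p.length - 3 - t) (by omega)).symm

theorem dconn_comm {a b : V} : DConn E C a b ↔ DConn E C b a :=
  ⟨DConn.symm, DConn.symm⟩

theorem dconn_of_adj {a b : V} (hab : Adj E a b ∨ Adj E b a) : DConn E C a b := by
  refine ⟨[a, b], by simp, rfl, rfl, fun t ht => ?_, fun t ht => ?_⟩
  · obtain rfl : t = 0 := by simp only [List.length_cons, List.length_nil] at ht; omega
    exact hab
  · simp at ht

theorem dconn_of_activeTriple {a b c : V} (hab : Adj E a b ∨ Adj E b a)
    (hbc : Adj E b c ∨ Adj E c b) (hact : ActiveTriple E C a b c) : DConn E C a c := by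
  refine ⟨[a, b, c], by simp, rfl, rfl, fun t ht => ?_, fun t ht => ?_⟩
  · obtain rfl | rfl : t = 0 ∨ t = 1 := by
      simp only [List.length_cons, List.length_nil] at ht; omega
    exacts [hab, hbc]
  · obtain rfl : t = 0 := by simp only [List.length_cons, List.length_nil] at ht; omega
    exact hact

theorem dsep_singleton_iff {a b : V} : DSep E {a} {b} C ↔ ¬ DConn E C a b := by
  simp [DSep]

/-- No vertex of `D` is an activated collider, so an active path that leaves `p[m] ∈ D` backwards
keeps doing so, all the way to `p[0]`. -/
theorem head_mem_of_activePath {D : Set V} (hD : ∀ a b, Adj E a b → a ∈ D → b ∈ D)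
    (hDC : ∀ d ∈ D, d ∉ C) {p : List V}
    (hadj : ∀ (t : ℕ) (h : t + 1 < p.length), Adj E p[t] p[t + 1] ∨ Adj E p[t + 1] p[t])
    (htri : ∀ (t : ℕ) (h : t + 2 < p.length), ActiveTriple E C p[t] p[t + 1] p[t + 2]) :
    ∀ (m : ℕ) (h : m + 1 < p.length), p[m] ∈ D → Adj E p[m + 1] p[m] → p[0] ∈ D := by
  intro m
  induction m with
  | zero => exact fun _ h _ => h
  | succ m ih =>
    intro hm hmD hback
    have hdesc : ∀ d, Relation.ReflTransGen (Adj E) p[m + 1] d → d ∈ D := fun d hd => by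
      induction hd with
      | refl => exact hmD
      | tail _ hcd ih => exact hD _ _ hcd ih
    rcases htri m hm with ⟨-, d, hdC, hd⟩ | ⟨hnc, -⟩
    · exact absurd hdC (hDC d (hdesc d hd))
    · have hforward : Adj E p[m + 1] p[m] :=
        (hadj m (by omega)).resolve_left fun h => hnc ⟨h, hback⟩
      exact ih (by omega) (hD _ _ hforward hmD) hforward

end DSeparation

namespace SingleCI

variable {V : Type}

noncomputable def tier (i j : V) (K : Finset V) (v : V) : ℕ :=
  if v = i then 0 else if v ∈ K then 1 else if v = j then 2 else 3

variable {i j : V} {K : Finset V}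

theorem tier_le_three (v : V) : tier i j K v ≤ 3 := by
  unfold tier; split_ifs <;> omega

theorem tier_left : tier i j K i = 0 := by
  simp [tier]

theorem tier_of_mem {k : V} (hk : k ∈ K) (hi : i ∉ K) : tier i j K k = 1 := by
  simp [tier, hk, ne_of_mem_of_not_mem hk hi]

theorem tier_right (hij : i ≠ j) (hj : j ∉ K) : tier i j K j = 2 := by
  simp [tier, hij.symm, hj]

theorem tier_of_not_mem {v : V} (hvi : v ≠ i) (hvK : v ∉ K) (hvj : v ≠ j) :
    tier i j K v = 3 := by
  simp [tier, hvi, hvK, hvj]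

theorem mem_of_tier_le_two {v : V} (h : tier i j K v ≤ 2) (hvi : v ≠ i) (hvj : v ≠ j) :
    v ∈ K := by
  unfold tier at h; split_ifs at h <;> simp_all

theorem tier_eq_three_of_two_le {v : V} (h : 2 ≤ tier i j K v) (hvj : v ≠ j) :
    tier i j K v = 3 := by
  unfold tier at h ⊢; split_ifs at h ⊢ <;> simp_all

variable [Fintype V]

noncomputable def rank (i j : V) (K : Finset V) (v : V) : ℕ :=
  tier i j K v * Fintype.card V + Fintype.equivFin V v

theorem rank_lt_of_tier_lt {a b : V} (h : tier i j K a < tier i j K b) :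
    rank i j K a < rank i j K b := by
  have ha := (Fintype.equivFin V a).isLt
  unfold rank
  nlinarith

theorem tier_le_of_rank_le {a b : V} (h : rank i j K a ≤ rank i j K b) :
    tier i j K a ≤ tier i j K b :=
  not_lt.mp fun h' => (rank_lt_of_tier_lt h').not_ge h

theorem rank_injective : Function.Injective (rank i j K) := by
  intro a b h
  have htier := (tier_le_of_rank_le h.le).antisymm (tier_le_of_rank_le h.ge)
  unfold rank at h
  rw [htier] at h
  exact (Fintype.equivFin V).injective (Fin.ext (by omega))

noncomputable def singleCIDAG (i j : V) (K : Finset V) : EdgeSet V :=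
  Finset.univ.filter fun e => rank i j K e.1 < rank i j K e.2 ∧ e ≠ (i, j)

local notation "G" => singleCIDAG i j K

theorem adj_singleCIDAG_iff {a b : V} :
    Adj G a b ↔ rank i j K a < rank i j K b ∧ (a, b) ≠ (i, j) := by
  simp [Adj, singleCIDAG]

theorem rank_lt_of_adj {a b : V} (h : Adj G a b) : rank i j K a < rank i j K b :=
  (adj_singleCIDAG_iff.mp h).1

theorem tier_le_of_adj {a b : V} (h : Adj G a b) : tier i j K a ≤ tier i j K b :=
  tier_le_of_rank_le (rank_lt_of_adj h).le

theorem not_adj_of_adj {a b : V} (h : Adj G a b) : ¬ Adj G b a :=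
  fun h' => lt_asymm (rank_lt_of_adj h) (rank_lt_of_adj h')

theorem adj_of_tier_lt {a b : V} (h : tier i j K a < tier i j K b) (hab : (a, b) ≠ (i, j)) :
    Adj G a b :=
  adj_singleCIDAG_iff.mpr ⟨rank_lt_of_tier_lt h, hab⟩

theorem isDAG_singleCIDAG : IsDAG G := by
  have hrank {a b : V} (h : Relation.TransGen (Adj G) a b) : rank i j K a < rank i j K b := by
    induction h with
    | single h => exact rank_lt_of_adj h
    | tail _ h ih => exact ih.trans (rank_lt_of_adj h)
  exact fun v hv => (hrank hv).false

theorem adj_or_adj_of_ne {a b : V} (hab : a ≠ b) (h₁ : (a, b) ≠ (i, j)) (h₂ : (b, a) ≠ (i, j)) :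
    Adj G a b ∨ Adj G b a :=
  (rank_injective.ne hab).lt_or_gt.imp (fun h => adj_singleCIDAG_iff.mpr ⟨h, h₁⟩)
    (fun h => adj_singleCIDAG_iff.mpr ⟨h, h₂⟩)

theorem dconn_of_ne (hij : i ≠ j) (hi : i ∉ K) (hj : j ∉ K) {C : Finset V} (hiC : i ∉ C)
    (hjC : j ∉ C) (hC : C ≠ K) : DConn G C i j := by
  by_cases hKC : K ⊆ C
  · obtain ⟨c, hcC, hcK⟩ := Finset.exists_of_ssubset (hKC.ssubset_of_ne hC.symm)
    have hc : tier i j K c = 3 :=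
      tier_of_not_mem (ne_of_mem_of_not_mem hcC hiC) hcK (ne_of_mem_of_not_mem hcC hjC)
    have hic : Adj G i c :=
      adj_of_tier_lt (by rw [tier_left, hc]; omega) (by simpa using ne_of_mem_of_not_mem hcC hjC)
    have hjc : Adj G j c :=
      adj_of_tier_lt (by rw [tier_right hij hj, hc]; omega) (by simp [hij.symm])
    exact dconn_of_activeTriple (.inl hic) (.inr hjc) (.inl ⟨⟨hic, hjc⟩, c, hcC, .refl⟩)
  · obtain ⟨k, hkK, hkC⟩ := Finset.not_subset.mp hKC
    have hik : Adj G i k := adj_of_tier_lt (by rw [tier_left, tier_of_mem hkK hi]; omega)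
      (by simpa using ne_of_mem_of_not_mem hkK hj)
    have hkj : Adj G k j := adj_of_tier_lt (by rw [tier_of_mem hkK hi, tier_right hij hj]; omega)
      (by simp [ne_of_mem_of_not_mem hkK hi])
    exact dconn_of_activeTriple (.inl hik) (.inl hkj)
      (.inr ⟨fun h => not_adj_of_adj hkj h.2, hkC⟩)

theorem not_dconn (hij : i ≠ j) (hi : i ∉ K) (hj : j ∉ K) : ¬ DConn G K i j := by
  rw [dconn_iff]
  rintro ⟨p, hlen, hh, hl, hadj, htri⟩
  obtain ⟨m, hm⟩ : ∃ m, p.length = m + 2 := ⟨p.length - 2, by omega⟩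
  have hpi : p[0] = i := by
    rw [List.head?_eq_getElem?] at hh
    exact (List.getElem?_eq_some_iff.mp hh).2
  have hpj : p[m + 1] = j := by
    rw [List.getLast?_eq_getElem?, hm] at hl
    exact (List.getElem?_eq_some_iff.mp hl).2
  have hlast : tier i j K p[m] = 3 ∧ Adj G p[m + 1] p[m] := by
    rcases hadj m (by omega) with h | h
    · exfalso
      rw [hpj] at h
      have hK : p[m] ∈ K := mem_of_tier_le_two (tier_right hij hj ▸ tier_le_of_adj h)
        (fun he => (adj_singleCIDAG_iff.mp h).2 (by rw [he]))
        (fun he => (rank_lt_of_adj h).ne (by rw [he]))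
      cases m with
      | zero => exact hi (hpi ▸ hK)
      | succ k =>
        rcases htri k (by omega) with ⟨⟨-, hc⟩, -⟩ | ⟨-, hnK⟩
        · exact not_adj_of_adj h (hpj ▸ hc)
        · exact hnK hK
    · rw [hpj] at h ⊢
      refine ⟨tier_eq_three_of_two_le (tier_right hij hj ▸ tier_le_of_adj h) ?_, h⟩
      exact fun he => (rank_lt_of_adj h).ne (by rw [he])
  have hhead := head_mem_of_activePath (D := {v | tier i j K v = 3})
    (fun a b hab (ha : tier i j K a = 3) => (tier_le_three b).antisymm (ha ▸ tier_le_of_adj hab))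
    (fun k (hk : tier i j K k = 3) hkK => by rw [tier_of_mem hkK hi] at hk; omega)
    hadj htri m (by omega) hlast.1 hlast.2
  simp [hpi, tier_left] at hhead

theorem not_dconn_iff (hij : i ≠ j) (hi : i ∉ K) (hj : j ∉ K) {C : Finset V} (hiC : i ∉ C)
    (hjC : j ∉ C) : ¬ DConn G C i j ↔ C = K :=
  ⟨fun h => by_contra (h ∘ dconn_of_ne hij hi hj hiC hjC),
    fun h => by rw [h]; exact not_dconn hij hi hj⟩

end SingleCI

open SingleCI in
theorem single_CI_dag_general (i j : V) (K : Finset V) (hij : i ≠ j) (hK : K ⊆ Finset.univ \ {i, j}) :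
    ∃ G : EdgeSet V, IsDAG G ∧
      ∀ (a b : V) (C : Finset V), a ≠ b → a ∉ C → b ∉ C →
        (DSep G {a} {b} C ↔ ((a = i ∧ b = j ∨ a = j ∧ b = i) ∧ C = K)) := by
  have hi : i ∉ K := fun h => by simpa using hK h
  have hj : j ∉ K := fun h => by simpa using hK h
  refine ⟨singleCIDAG i j K, isDAG_singleCIDAG, fun a b C hab haC hbC => ?_⟩
  rw [dsep_singleton_iff]
  by_cases hpair : a = i ∧ b = j ∨ a = j ∧ b = i
  · rcases hpair with ⟨rfl, rfl⟩ | ⟨rfl, rfl⟩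
    · simpa using not_dconn_iff hij hi hj haC hbC
    · simpa [dconn_comm] using not_dconn_iff hab.symm hi hj hbC haC
  · simp only [hpair, false_and, iff_false, not_not]
    refine dconn_of_adj (adj_or_adj_of_ne hab ?_ ?_) <;> rintro ⟨⟩ <;> simp at hpair

/-- for any triple `⟨i, j | K⟩ ∈ I`, there is a DAG whose singleton
d-separation statements are exactly that triple (and its symmetric counterpart). -/
theorem single_CI_dag (I : IndepModel V) (hcard : 2 ≤ Fintype.card V)
    (i j : V) (K : Finset V) (hij : i ≠ j) (hK : K ⊆ Finset.univ \ {i, j})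
    (hI : I {i} {j} K) :
    ∃ G : EdgeSet V, IsDAG G ∧
      ∀ (a b : V) (C : Finset V), a ≠ b → a ∉ C → b ∉ C →
        (DSep G {a} {b} C ↔ ((a = i ∧ b = j ∨ a = j ∧ b = i) ∧ C = K)) :=
  single_CI_dag_general i j K hij hK
end

section
/- Let G be a DAG and let H be obtained from G by reversing a single directed edge i → j. Then H is a DAG with the same d-separation statements as G (i.e., H ∈ MEC(G)) if and only if i → j is a covered edge in G, i.e., Pa(i, G) = Pa(j, G) \ {i}. -/
open Classical
attribute [local instance] Classical.propDecidable

variable {V : Type} [Fintype V] [DecidableEq V]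

/-!
If `i → j` is not covered, some `k` is a parent of exactly one of `i` and `j`. In the one of the
two graphs where `k` is a parent of the tail of the edge but not of its head, the head is
d-separated from `k` by its own parents (local Markov property); in the other graph the head, the
tail and `k` form a collider at the tail, which is one of those parents, so they are d-connected.

If `i → j` is covered, a d-connecting walk is run as a state machine on pairs (vertex, direction
in which it was entered), after rerouting every active collider through a vertex of `C`. A walk of
`G` is then simulated step by step in the reversed graph: entering `i` or `j` from a common parent
is simulated by waiting at that parent, and the remaining states at `i` and `j` by states at the
other endpoint. The reversed edge is again covered, so the argument also runs backwards.
-/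

section

omit [Fintype V]

section

omit [DecidableEq V]

theorem Relation.ReflTransGen.exists_of_simulation {α β : Type*} {r : α → α → Prop}
    {s : β → β → Prop} (R : α → β → Prop)
    (hR : ∀ a b b', R a b → s b b' → ∃ a', Relation.ReflTransGen r a a' ∧ R a' b')
    {a : α} {b b' : β} (hab : R a b) (h : Relation.ReflTransGen s b b') :
    ∃ a', Relation.ReflTransGen r a a' ∧ R a' b' := by
  induction h with
  | refl => exact ⟨a, .refl, hab⟩
  | tail _ hst ih =>
    obtain ⟨a₁, ha₁, hR₁⟩ := ih
    obtain ⟨a₂, ha₂, hR₂⟩ := hR _ _ _ hR₁ hst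
    exact ⟨a₂, ha₁.trans ha₂, hR₂⟩

namespace IsDAG

variable {E : EdgeSet V}

theorem not_adj_self (hE : IsDAG E) (v : V) : ¬ Adj E v v :=
  fun h => hE v (.single h)

theorem not_adj_of_adj (hE : IsDAG E) {u v : V} (h : Adj E u v) : ¬ Adj E v u :=
  fun h' => hE u (.head h (.single h'))

theorem ne_of_adj (hE : IsDAG E) {u v : V} (h : Adj E u v) : u ≠ v := by
  rintro rfl
  exact hE.not_adj_self u h

theorem subset {E' : EdgeSet V} (hE : IsDAG E) (h : E' ⊆ E) : IsDAG E' :=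
  fun v hv => hE v (Relation.TransGen.mono (fun _ _ hxy => h hxy) _ _ hv)

end IsDAG

variable {E : EdgeSet V} {C : Finset V}

/-- A d-connecting walk is run as a sequence of states `(x, d)`: the walk stands at `x`, having
entered it along an edge pointing into `x` (`d = true`) or out of `x` (`d = false`). -/
def Enters (E : EdgeSet V) (u : V) : V × Bool → Prop
  | (x, true) => Adj E u x
  | (x, false) => Adj E x u

/-- `x` is a collider exactly when it is entered along an edge pointing into it and left along
another such edge; `coll` says which colliders let the walk pass. -/
def CanLeave (C : Finset V) (coll : V → Prop) (x : V) (d e : Bool) : Prop :=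
  if d && !e then coll x else x ∉ C

def WalkStep (E : EdgeSet V) (C : Finset V) (coll : V → Prop) (s t : V × Bool) : Prop :=
  Enters E s.1 t ∧ CanLeave C coll s.1 s.2 t.2

def IsAncestorOf (E : EdgeSet V) (C : Finset V) (x : V) : Prop :=
  ∃ c ∈ C, Relation.ReflTransGen (Adj E) x c

@[simp] theorem canLeave_true {coll : V → Prop} {x : V} {d : Bool} :
    CanLeave C coll x d true ↔ x ∉ C := by
  simp [CanLeave]

@[simp] theorem canLeave_false_left {coll : V → Prop} {x : V} {e : Bool} :
    CanLeave C coll x false e ↔ x ∉ C := by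
  simp [CanLeave]

@[simp] theorem canLeave_true_false {coll : V → Prop} {x : V} :
    CanLeave C coll x true false ↔ coll x := by
  simp [CanLeave]

theorem WalkStep.child {coll : V → Prop} {x y : V} {d : Bool} (h : Adj E x y) (hx : x ∉ C) :
    WalkStep E C coll (x, d) (y, true) :=
  ⟨h, canLeave_true.2 hx⟩

theorem WalkStep.parent {coll : V → Prop} {x y : V} {d : Bool} (h : Adj E y x)
    (hx : CanLeave C coll x d false) : WalkStep E C coll (x, d) (y, false) :=
  ⟨h, hx⟩

theorem WalkStep.mono {coll coll' : V → Prop} (hc : ∀ x, coll x → coll' x) {s t : V × Bool}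
    (h : WalkStep E C coll s t) : WalkStep E C coll' s t := by
  refine ⟨h.1, ?_⟩
  have h₂ := h.2
  simp only [CanLeave] at h₂ ⊢
  split_ifs at h₂ ⊢
  exacts [hc _ h₂, h₂]

theorem exists_enters {u x : V} (h : Adj E u x ∨ Adj E x u) : ∃ d, Enters E u (x, d) :=
  h.elim (⟨true, ·⟩) (⟨false, ·⟩)

theorem adj_or_adj_of_enters {u x : V} {d : Bool} (h : Enters E u (x, d)) :
    Adj E u x ∨ Adj E x u := by
  cases d
  exacts [.inr h, .inl h]

theorem IsDAG.activeTriple_iff (hE : IsDAG E) {u x y : V} {d e : Bool}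
    (hu : Enters E u (x, d)) (hy : Enters E x (y, e)) :
    ActiveTriple E C u x y ↔ CanLeave C (IsAncestorOf E C) x d e := by
  cases d <;> cases e <;>
    simp_all [Enters, ActiveTriple, IsCollider, CanLeave, IsAncestorOf, hE.not_adj_of_adj]

def AdjChain (E : EdgeSet V) (p : List V) : Prop :=
  ∀ (i : ℕ) (h : i + 1 < p.length),
    Adj E (p.get ⟨i, by omega⟩) (p.get ⟨i + 1, h⟩) ∨
      Adj E (p.get ⟨i + 1, h⟩) (p.get ⟨i, by omega⟩)

def ActiveChain (E : EdgeSet V) (C : Finset V) (p : List V) : Prop :=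
  ∀ (i : ℕ) (h : i + 2 < p.length),
    ActiveTriple E C (p.get ⟨i, by omega⟩) (p.get ⟨i + 1, by omega⟩) (p.get ⟨i + 2, h⟩)

theorem adjChain_singleton (x : V) : AdjChain E [x] :=
  fun _ h => absurd h (by simp)

theorem adjChain_cons_cons {u x : V} {q : List V} :
    AdjChain E (u :: x :: q) ↔ (Adj E u x ∨ Adj E x u) ∧ AdjChain E (x :: q) := by
  refine ⟨fun h => ⟨h 0 (by simp), fun n hn => h (n + 1) (by simp at hn ⊢; omega)⟩, ?_⟩
  rintro ⟨h₀, h⟩ (_ | n) hn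
  exacts [h₀, h n (by simp at hn ⊢; omega)]

theorem activeChain_pair (u x : V) : ActiveChain E C [u, x] :=
  fun _ h => absurd h (by simp)

theorem activeChain_cons_cons_cons {u x y : V} {q : List V} :
    ActiveChain E C (u :: x :: y :: q) ↔
      ActiveTriple E C u x y ∧ ActiveChain E C (x :: y :: q) := by
  refine ⟨fun h => ⟨h 0 (by simp), fun n hn => h (n + 1) (by simp at hn ⊢; omega)⟩, ?_⟩
  rintro ⟨h₀, h⟩ (_ | n) hn
  exacts [h₀, h n (by simp at hn ⊢; omega)]

theorem IsDAG.exists_reflTransGen_of_chain (hE : IsDAG E) {b : V} :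
    ∀ (q : List V) {u x : V} {d : Bool}, Enters E u (x, d) → AdjChain E (x :: q) →
      ActiveChain E C (u :: x :: q) → (x :: q).getLast? = some b →
      ∃ e, Relation.ReflTransGen (WalkStep E C (IsAncestorOf E C)) (x, d) (b, e)
  | [], _, _, d, _, _, _, hb => by
    obtain rfl : _ = b := by simpa using hb
    exact ⟨d, .refl⟩
  | y :: q, _, _, _, hu, hadj, hact, hb => by
    obtain ⟨hxy, hadj⟩ := adjChain_cons_cons.1 hadj
    obtain ⟨htri, hact⟩ := activeChain_cons_cons_cons.1 hact
    obtain ⟨e, hy⟩ := exists_enters hxy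
    obtain ⟨e', h⟩ := hE.exists_reflTransGen_of_chain q hy hadj hact (by simpa using hb)
    exact ⟨e', .head ⟨hy, (hE.activeTriple_iff hu hy).1 htri⟩ h⟩

theorem IsDAG.exists_chain_of_reflTransGen (hE : IsDAG E) {s : V × Bool} {b : V} {e : Bool}
    (h : Relation.ReflTransGen (WalkStep E C (IsAncestorOf E C)) s (b, e)) {u : V}
    (hu : Enters E u s) :
    ∃ q, AdjChain E (s.1 :: q) ∧ ActiveChain E C (u :: s.1 :: q) ∧
      (s.1 :: q).getLast? = some b := by
  induction h using Relation.ReflTransGen.head_induction_on generalizing u with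
  | refl => exact ⟨[], adjChain_singleton b, activeChain_pair u b, rfl⟩
  | head hst _ ih =>
    rename_i s t _
    obtain ⟨q, hadj, hact, hb⟩ := ih hst.1
    refine ⟨t.1 :: q, adjChain_cons_cons.2 ⟨adj_or_adj_of_enters hst.1, hadj⟩,
      activeChain_cons_cons_cons.2 ⟨(hE.activeTriple_iff hu hst.1).2 hst.2, hact⟩, ?_⟩
    simpa using hb

theorem IsDAG.dConn_iff (hE : IsDAG E) {a b : V} (ha : a ∉ C) :
    DConn E C a b ↔
      ∃ e, Relation.TransGen (WalkStep E C (IsAncestorOf E C)) (a, false) (b, e) := by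
  constructor
  · rintro ⟨_ | ⟨a', _ | ⟨x, q⟩⟩, hlen, hhead, hlast, hadj, hact⟩
    · simp at hlen
    · simp at hlen
    obtain rfl : a' = a := by simpa using hhead
    obtain ⟨hax, hadj⟩ := adjChain_cons_cons.1 hadj
    obtain ⟨d, hd⟩ := exists_enters hax
    obtain ⟨e, h⟩ := hE.exists_reflTransGen_of_chain q hd hadj hact hlast
    exact ⟨e, .head' ⟨hd, canLeave_false_left.2 ha⟩ h⟩
  · rintro ⟨e, h⟩
    obtain ⟨⟨x, d⟩, hstep, h⟩ := Relation.TransGen.head'_iff.1 h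
    obtain ⟨q, hadj, hact, hlast⟩ := hE.exists_chain_of_reflTransGen h hstep.1
    exact ⟨a :: x :: q, by simp, rfl, by simpa using hlast,
      adjChain_cons_cons.2 ⟨adj_or_adj_of_enters hstep.1, hadj⟩, hact⟩

/-- A collider that is only an ancestor of `C` can be bypassed by a detour down to `C` and
back. -/
theorem reflTransGen_walkStep_of_isAncestorOf {x : V} (hx : x ∉ C)
    (hanc : IsAncestorOf E C x) :
    Relation.ReflTransGen (WalkStep E C (· ∈ C)) (x, true) (x, false) := by
  obtain ⟨c, hc, hxc⟩ := hanc
  induction hxc using Relation.ReflTransGen.head_induction_on with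
  | refl => exact absurd hc hx
  | head hxy _ ih =>
    rename_i y _
    by_cases hy : y ∈ C
    · exact .tail (.single (.child hxy hx)) (.parent hxy (canLeave_true_false.2 hy))
    · exact .head (.child hxy hx) ((ih hy).tail (.parent hxy (canLeave_false_left.2 hy)))

theorem exists_reflTransGen_walkStep_mem {s t : V × Bool}
    (h : Relation.ReflTransGen (WalkStep E C (IsAncestorOf E C)) s t) :
    ∃ e, Relation.ReflTransGen (WalkStep E C (· ∈ C)) s (t.1, e) := by
  -- Off `C`, the state `(x, false)` can do whatever `(x, true)` can.
  have hsim : ∀ s' t t', (s' = t ∨ t.1 ∉ C ∧ s' = (t.1, false)) →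
      WalkStep E C (IsAncestorOf E C) t t' →
      ∃ s'', Relation.ReflTransGen (WalkStep E C (· ∈ C)) s' s'' ∧
        (s'' = t' ∨ t'.1 ∉ C ∧ s'' = (t'.1, false)) := by
    rintro s' ⟨x, d⟩ ⟨y, e⟩ hR ⟨hxy, hleave⟩
    refine ⟨(y, e), ?_, .inl rfl⟩
    rcases hR with rfl | ⟨hx, rfl⟩
    · cases d <;> cases e
      case true.false =>
        by_cases hx : x ∈ C
        · exact .single (.parent hxy (canLeave_true_false.2 hx))
        · exact (reflTransGen_walkStep_of_isAncestorOf hx (canLeave_true_false.1 hleave)).tail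
            (.parent hxy (canLeave_false_left.2 hx))
      all_goals exact .single ⟨hxy, by simpa using hleave⟩
    · exact .single ⟨hxy, canLeave_false_left.2 hx⟩
  obtain ⟨s', hs', rfl | ⟨-, rfl⟩⟩ := h.exists_of_simulation _ hsim (.inl rfl)
  exacts [⟨_, hs'⟩, ⟨_, hs'⟩]

theorem IsDAG.dConn_iff_reflTransGen (hE : IsDAG E) {a b : V} (ha : a ∉ C) (hab : a ≠ b) :
    DConn E C a b ↔ ∃ e, Relation.ReflTransGen (WalkStep E C (· ∈ C)) (a, false) (b, e) := by
  rw [hE.dConn_iff ha]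
  constructor
  · rintro ⟨e, h⟩
    exact exists_reflTransGen_walkStep_mem h.to_reflTransGen
  · rintro ⟨e, h⟩
    refine ⟨e, (Relation.reflTransGen_iff_eq_or_transGen.1 ?_).resolve_left ?_⟩
    · exact Relation.ReflTransGen.mono
        (fun _ _ => WalkStep.mono fun x hx => ⟨x, hx, .refl⟩) _ _ h
    · exact fun h => hab (Prod.ext_iff.1 h).1.symm

end

theorem mem_parents {E : EdgeSet V} {x v : V} : x ∈ parents E v ↔ Adj E x v := by
  simp [parents, Adj]

theorem Relation.TransGen.adj_insert {E : EdgeSet V} {u v x y : V}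
    (h : Relation.TransGen (Adj (insert (u, v) E)) x y) :
    Relation.TransGen (Adj E) x y ∨
      Relation.ReflTransGen (Adj E) x u ∧ Relation.ReflTransGen (Adj E) v y := by
  have adj_insert : ∀ {a b}, Adj (insert (u, v) E) a b → (a = u ∧ b = v) ∨ Adj E a b := by
    intro a b hab
    simpa [Adj] using hab
  induction h with
  | single hxy =>
    rcases adj_insert hxy with ⟨rfl, rfl⟩ | hxy
    · exact .inr ⟨.refl, .refl⟩
    · exact .inl (.single hxy)
  | tail _ hyz ih =>
    rcases adj_insert hyz with ⟨rfl, rfl⟩ | hyz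
    · exact .inr ⟨ih.elim (·.to_reflTransGen) (·.1), .refl⟩
    · exact ih.imp (·.tail hyz) fun ⟨hxu, hvy⟩ => ⟨hxu, hvy.tail hyz⟩

theorem IsDAG.insert {E : EdgeSet V} {u v : V} (hE : IsDAG E)
    (hvu : ¬ Relation.ReflTransGen (Adj E) v u) : IsDAG (insert (u, v) E) := by
  intro w hw
  rcases hw.adj_insert with hw | ⟨hwu, hvw⟩
  · exact hE w hw
  · exact hvu (hvw.trans hwu)

def reverseEdge (E : EdgeSet V) (i j : V) : EdgeSet V := insert (j, i) (E.erase (i, j))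

theorem adj_reverseEdge {E : EdgeSet V} {i j x y : V} :
    Adj (reverseEdge E i j) x y ↔ x = j ∧ y = i ∨ Adj E x y ∧ ¬ (x = i ∧ y = j) := by
  simp only [reverseEdge, Adj, Finset.mem_insert, Finset.mem_erase, Prod.mk.injEq, ne_eq]
  tauto

theorem adj_reverseEdge_self {E : EdgeSet V} {i j : V} : Adj (reverseEdge E i j) j i :=
  adj_reverseEdge.2 (.inl ⟨rfl, rfl⟩)

theorem adj_reverseEdge_of_adj {E : EdgeSet V} {i j x y : V} (h : Adj E x y)
    (hxy : ¬ (x = i ∧ y = j)) : Adj (reverseEdge E i j) x y :=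
  adj_reverseEdge.2 (.inr ⟨h, hxy⟩)

theorem reverseEdge_reverseEdge {E : EdgeSet V} {i j : V} (hE : IsDAG E) (hij : Adj E i j) :
    reverseEdge (reverseEdge E i j) j i = E := by
  ext ⟨x, y⟩
  have := hE.not_adj_of_adj hij
  change Adj _ x y ↔ Adj E x y
  simp only [adj_reverseEdge]
  constructor
  · rintro (⟨rfl, rfl⟩ | ⟨⟨rfl, rfl⟩ | ⟨h, -⟩, hne⟩)
    exacts [hij, absurd ⟨rfl, rfl⟩ hne, h]
  · intro h
    by_cases hxy : x = i ∧ y = j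
    · exact .inl hxy
    · refine .inr ⟨.inr ⟨h, hxy⟩, ?_⟩
      rintro ⟨rfl, rfl⟩
      exact this h

namespace CoveredEdge

variable {G : EdgeSet V} {i j : V}

theorem adj_iff (h : CoveredEdge G i j) {k : V} : Adj G k i ↔ Adj G k j ∧ k ≠ i := by
  rw [← mem_parents, h.2, Finset.mem_erase, mem_parents, and_comm]

theorem isDAG_reverseEdge (hG : IsDAG G) (h : CoveredEdge G i j) :
    IsDAG (reverseEdge G i j) := by
  refine (hG.subset (Finset.erase_subset _ _)).insert fun hpath => ?_
  rcases hpath.cases_tail with rfl | ⟨m, him, hmj⟩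
  · exact hG.ne_of_adj h.1 rfl
  · obtain ⟨hmi, hmj⟩ : m ≠ i ∧ Adj G m j := by simpa [Adj] using hmj
    have him : Relation.ReflTransGen (Adj G) i m :=
      Relation.ReflTransGen.mono (fun _ _ hxy => Finset.mem_of_mem_erase hxy) _ _ him
    exact hG i (.tail' him ((h.adj_iff).2 ⟨hmj, hmi⟩))

theorem reverse (hG : IsDAG G) (h : CoveredEdge G i j) :
    CoveredEdge (reverseEdge G i j) j i := by
  refine ⟨adj_reverseEdge_self, Finset.ext fun k => ?_⟩
  have hij := hG.ne_of_adj h.1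
  have hkj : Adj G k j → k ≠ j := hG.ne_of_adj
  simp only [Finset.mem_erase, mem_parents, adj_reverseEdge, h.adj_iff]
  grind

end CoveredEdge

theorem IsDAG.dSep_parents {E : EdgeSet V} (hE : IsDAG E) {v k : V}
    (hvk : ¬ Relation.ReflTransGen (Adj E) v k) (hkv : ¬ Adj E k v) :
    DSep E {v} {k} (parents E v) := by
  simp only [DSep, Finset.mem_singleton, forall_eq]
  have hv : v ∉ parents E v := fun h => hE.not_adj_self v (mem_parents.1 h)
  have hne : v ≠ k := fun h => hvk (h ▸ .refl)
  rw [hE.dConn_iff_reflTransGen hv hne]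
  rintro ⟨e, h⟩
  have key : ∀ t,
      Relation.ReflTransGen (WalkStep E (parents E v) (· ∈ parents E v)) (v, false) t →
      t.2 = true ∧ Relation.TransGen (Adj E) v t.1 ∨ t.2 = false ∧ (t.1 = v ∨ Adj E t.1 v) := by
    intro t ht
    induction ht with
    | refl => exact .inr ⟨rfl, .inl rfl⟩
    | tail _ hstep ih =>
      rename_i x y _
      obtain ⟨x, d⟩ := x
      obtain ⟨y, e⟩ := y
      obtain ⟨hxy, hleave⟩ := hstep
      rcases ih with ⟨rfl, hvx⟩ | ⟨rfl, rfl | hxv⟩ <;> cases e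
      · exact absurd (hvx.tail (mem_parents.1 (canLeave_true_false.1 hleave))) (hE v)
      · exact .inl ⟨rfl, hvx.tail hxy⟩
      · exact .inr ⟨rfl, .inr hxy⟩
      · exact .inl ⟨rfl, .single hxy⟩
      all_goals exact absurd (mem_parents.2 hxv) (canLeave_false_left.1 hleave)
  rcases key _ h with ⟨-, hvk'⟩ | ⟨-, rfl | hkv'⟩
  exacts [hvk hvk'.to_reflTransGen, hne rfl, hkv hkv']

theorem not_iSub_of_adj {E E' : EdgeSet V} (hE : IsDAG E) {a b k : V} (hab : Adj E a b)
    (hka : Adj E k a) (hkb : ¬ Adj E k b) (hba' : Adj E' b a) (hka' : Adj E' k a) :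
    ¬ ISub E E' := by
  intro hsub
  have hbk : b ≠ k := by
    rintro rfl
    exact hE.not_adj_of_adj hab hka
  have hdisj : PairwiseDisjoint3 {b} {k} (parents E b) := by
    simp [PairwiseDisjoint3, mem_parents, hbk, hE.not_adj_self, hkb]
  have hsep : DSep E {b} {k} (parents E b) :=
    hE.dSep_parents (fun hbk => hE b (.tail' (hbk.tail hka) hab)) hkb
  refine hsub _ _ _ hdisj hsep b (Finset.mem_singleton_self b) k (Finset.mem_singleton_self k)
    ⟨[b, a, k], by simp, rfl, rfl, ?_, ?_⟩
  · exact adjChain_cons_cons.2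
      ⟨.inl hba', adjChain_cons_cons.2 ⟨.inr hka', adjChain_singleton k⟩⟩
  · exact activeChain_cons_cons_cons.2
      ⟨.inl ⟨⟨hba', hka'⟩, a, mem_parents.2 hab, .refl⟩, activeChain_pair a k⟩

theorem IsDAG.adj_reverseEdge_of_child_source {G : EdgeSet V} {i j y : V} (hG : IsDAG G)
    (hy : Adj G i y) (hyj : y ≠ j) :
    y ≠ i ∧ Adj (reverseEdge G i j) i y :=
  ⟨(hG.ne_of_adj hy).symm, adj_reverseEdge_of_adj hy fun h => hyj h.2⟩

namespace CoveredEdge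

variable {G : EdgeSet V} {i j : V} (hG : IsDAG G) (hcov : CoveredEdge G i j)
include hG hcov

theorem adj_reverseEdge_of_parent {p : V} (hp : Adj G p i) :
    p ≠ i ∧ p ≠ j ∧ Adj (reverseEdge G i j) p i ∧ Adj (reverseEdge G i j) p j := by
  have hpi := hG.ne_of_adj hp
  refine ⟨hpi, fun h => hG.not_adj_of_adj hcov.1 (h ▸ hp),
    adj_reverseEdge_of_adj hp fun h => hG.ne_of_adj hcov.1 h.2,
    adj_reverseEdge_of_adj (hcov.adj_iff.1 hp).1 fun h => hpi h.1⟩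

theorem adj_reverseEdge_of_child_target {y : V} (hy : Adj G j y) :
    y ≠ i ∧ y ≠ j ∧ Adj (reverseEdge G i j) j y :=
  ⟨fun h => hG.not_adj_of_adj hcov.1 (h ▸ hy), (hG.ne_of_adj hy).symm,
    adj_reverseEdge_of_adj hy fun h => hG.ne_of_adj hcov.1 h.1.symm⟩

end CoveredEdge

/-- `ReversalSim G C i j s t`: the walk state `s` of the graph with `i → j` reversed can do
whatever the walk state `t` of `G` can. A walk of `G` entering `i` or `j` from a common parent `p`
is simulated by waiting at `p`, from where both `i` and `j` are children after the reversal. -/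
inductive ReversalSim (G : EdgeSet V) (C : Finset V) (i j : V) : V × Bool → V × Bool → Prop
  | refl {x : V} {d : Bool} : (d = true → x ≠ i ∧ x ≠ j) → ReversalSim G C i j (x, d) (x, d)
  | parent_i {p : V} {d : Bool} : Adj G p i → p ∉ C → ReversalSim G C i j (p, d) (i, true)
  | parent_j {p : V} {d : Bool} : Adj G p i → p ∉ C → ReversalSim G C i j (p, d) (j, true)
  | parent_i_false {p : V} {d : Bool} : Adj G p i → p ∉ C → j ∈ C →
      ReversalSim G C i j (p, d) (i, false)
  | i_j : i ∉ C → ReversalSim G C i j (i, false) (j, true)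
  | j_j : j ∉ C → ReversalSim G C i j (j, false) (j, true)
  | j_i : j ∉ C → ReversalSim G C i j (j, false) (i, false)

namespace ReversalSim

variable {G : EdgeSet V} {C : Finset V} {i j : V} (hG : IsDAG G) (hcov : CoveredEdge G i j)
include hG hcov

omit hG in
theorem exists_of_refl {x y : V} {d e : Bool} (hxd : d = true → x ≠ i ∧ x ≠ j)
    (ht : WalkStep G C (· ∈ C) (x, d) (y, e)) :
    ∃ s', Relation.ReflTransGen (WalkStep (reverseEdge G i j) C (· ∈ C)) (x, d) s' ∧
      ReversalSim G C i j s' (y, e) := by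
  obtain ⟨hxy, hleave⟩ := ht
  cases e
  · by_cases hsp : y = i ∧ x = j
    · obtain ⟨rfl, rfl⟩ := hsp
      obtain rfl : d = false := Bool.eq_false_iff.2 fun h => (hxd h).2 rfl
      exact ⟨_, .refl, .j_i (canLeave_false_left.1 hleave)⟩
    · exact ⟨_, .single (.parent (adj_reverseEdge_of_adj hxy hsp) hleave), .refl (by simp)⟩
  · have hx : x ∉ C := canLeave_true.1 hleave
    by_cases hyi : y = i
    · subst hyi
      exact ⟨_, .refl, .parent_i hxy hx⟩
    by_cases hyj : y = j
    · subst hyj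
      by_cases hxi : x = i
      · subst hxi
        obtain rfl : d = false := Bool.eq_false_iff.2 fun h => (hxd h).1 rfl
        exact ⟨_, .refl, .i_j hx⟩
      · exact ⟨_, .refl, .parent_j (hcov.adj_iff.2 ⟨hxy, hxi⟩) hx⟩
    · exact ⟨_, .single (.child (adj_reverseEdge_of_adj hxy fun h => hyj h.2) hx),
        .refl fun _ => ⟨hyi, hyj⟩⟩

theorem exists_of_parent_i {p y : V} {d e : Bool} (hp : Adj G p i) (hpC : p ∉ C)
    (ht : WalkStep G C (· ∈ C) (i, true) (y, e)) :
    ∃ s', Relation.ReflTransGen (WalkStep (reverseEdge G i j) C (· ∈ C)) (p, d) s' ∧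
      ReversalSim G C i j s' (y, e) := by
  obtain ⟨hxy, hleave⟩ := ht
  have hpi : WalkStep (reverseEdge G i j) C (· ∈ C) (p, d) (i, true) :=
    .child (hcov.adj_reverseEdge_of_parent hG hp).2.2.1 hpC
  cases e
  · obtain ⟨-, -, hyi, -⟩ := hcov.adj_reverseEdge_of_parent hG hxy
    exact ⟨_, .tail (.single hpi) (.parent hyi hleave), .refl (by simp)⟩
  · by_cases hyj : y = j
    · subst hyj
      exact ⟨_, .refl, .parent_j hp hpC⟩
    · obtain ⟨hyi, hiy⟩ := hG.adj_reverseEdge_of_child_source hxy hyj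
      exact ⟨_, .tail (.single hpi) (.child hiy (canLeave_true.1 hleave)),
        .refl fun _ => ⟨hyi, hyj⟩⟩

theorem exists_of_parent_j {p y : V} {d e : Bool} (hp : Adj G p i) (hpC : p ∉ C)
    (ht : WalkStep G C (· ∈ C) (j, true) (y, e)) :
    ∃ s', Relation.ReflTransGen (WalkStep (reverseEdge G i j) C (· ∈ C)) (p, d) s' ∧
      ReversalSim G C i j s' (y, e) := by
  obtain ⟨hxy, hleave⟩ := ht
  have hpj : WalkStep (reverseEdge G i j) C (· ∈ C) (p, d) (j, true) :=
    .child (hcov.adj_reverseEdge_of_parent hG hp).2.2.2 hpC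
  cases e
  · by_cases hyi : y = i
    · subst hyi
      exact ⟨_, .refl, .parent_i_false hp hpC (canLeave_true_false.1 hleave)⟩
    · exact ⟨_, .tail (.single hpj)
        (.parent (adj_reverseEdge_of_adj hxy fun h => hyi h.1) hleave), .refl (by simp)⟩
  · obtain ⟨hyi, hyj, hjy⟩ := hcov.adj_reverseEdge_of_child_target hG hxy
    exact ⟨_, .tail (.single hpj) (.child hjy (canLeave_true.1 hleave)),
      .refl fun _ => ⟨hyi, hyj⟩⟩

theorem exists_of_parent_i_false {p y : V} {d e : Bool} (hp : Adj G p i) (hpC : p ∉ C)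
    (hjC : j ∈ C) (ht : WalkStep G C (· ∈ C) (i, false) (y, e)) :
    ∃ s', Relation.ReflTransGen (WalkStep (reverseEdge G i j) C (· ∈ C)) (p, d) s' ∧
      ReversalSim G C i j s' (y, e) := by
  obtain ⟨hxy, hleave⟩ := ht
  have hiC : i ∉ C := canLeave_false_left.1 hleave
  obtain ⟨-, -, hpi, hpj⟩ := hcov.adj_reverseEdge_of_parent hG hp
  cases e
  · obtain ⟨-, -, -, hyj⟩ := hcov.adj_reverseEdge_of_parent hG hxy
    exact ⟨_, .tail (.single (.child hpj hpC)) (.parent hyj (canLeave_true_false.2 hjC)),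
      .refl (by simp)⟩
  · by_cases hyj : y = j
    · subst hyj
      exact ⟨_, .refl, .parent_j hp hpC⟩
    · obtain ⟨hyi, hiy⟩ := hG.adj_reverseEdge_of_child_source hxy hyj
      exact ⟨_, .tail (.single (.child hpi hpC)) (.child hiy hiC), .refl fun _ => ⟨hyi, hyj⟩⟩

theorem exists_of_i_j {y : V} {e : Bool} (hiC : i ∉ C)
    (ht : WalkStep G C (· ∈ C) (j, true) (y, e)) :
    ∃ s', Relation.ReflTransGen (WalkStep (reverseEdge G i j) C (· ∈ C)) (i, false) s' ∧
      ReversalSim G C i j s' (y, e) := by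
  obtain ⟨hxy, hleave⟩ := ht
  cases e
  · by_cases hyi : y = i
    · subst hyi
      exact ⟨_, .refl, .refl (by simp)⟩
    · obtain ⟨-, -, hyi, -⟩ := hcov.adj_reverseEdge_of_parent hG (hcov.adj_iff.2 ⟨hxy, hyi⟩)
      exact ⟨_, .single (.parent hyi (canLeave_false_left.2 hiC)), .refl (by simp)⟩
  · obtain ⟨hyi, hyj, hjy⟩ := hcov.adj_reverseEdge_of_child_target hG hxy
    exact ⟨_, .tail (.single (.parent adj_reverseEdge_self
      (canLeave_false_left.2 hiC))) (.child hjy (canLeave_true.1 hleave)),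
      .refl fun _ => ⟨hyi, hyj⟩⟩

theorem exists_of_j_j {y : V} {e : Bool} (hjC : j ∉ C)
    (ht : WalkStep G C (· ∈ C) (j, true) (y, e)) :
    ∃ s', Relation.ReflTransGen (WalkStep (reverseEdge G i j) C (· ∈ C)) (j, false) s' ∧
      ReversalSim G C i j s' (y, e) := by
  obtain ⟨hxy, hleave⟩ := ht
  cases e
  · exact absurd (canLeave_true_false.1 hleave) hjC
  · obtain ⟨hyi, hyj, hjy⟩ := hcov.adj_reverseEdge_of_child_target hG hxy
    exact ⟨_, .single (.child hjy hjC), .refl fun _ => ⟨hyi, hyj⟩⟩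

theorem exists_of_j_i {y : V} {e : Bool} (hjC : j ∉ C)
    (ht : WalkStep G C (· ∈ C) (i, false) (y, e)) :
    ∃ s', Relation.ReflTransGen (WalkStep (reverseEdge G i j) C (· ∈ C)) (j, false) s' ∧
      ReversalSim G C i j s' (y, e) := by
  obtain ⟨hxy, hleave⟩ := ht
  cases e
  · obtain ⟨-, -, -, hyj⟩ := hcov.adj_reverseEdge_of_parent hG hxy
    exact ⟨_, .single (.parent hyj (canLeave_false_left.2 hjC)), .refl (by simp)⟩
  · by_cases hyj : y = j
    · subst hyj
      exact ⟨_, .refl, .j_j hjC⟩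
    · obtain ⟨hyi, hiy⟩ := hG.adj_reverseEdge_of_child_source hxy hyj
      exact ⟨_, .tail (.single (.child adj_reverseEdge_self hjC))
        (.child hiy (canLeave_false_left.1 hleave)), .refl fun _ => ⟨hyi, hyj⟩⟩

theorem exists_reflTransGen {s t t' : V × Bool} (hst : ReversalSim G C i j s t)
    (ht : WalkStep G C (· ∈ C) t t') :
    ∃ s', Relation.ReflTransGen (WalkStep (reverseEdge G i j) C (· ∈ C)) s s' ∧
      ReversalSim G C i j s' t' := by
  obtain ⟨y, e⟩ := t'
  cases hst with
  | refl hxd => exact exists_of_refl hcov hxd ht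
  | parent_i hp hpC => exact exists_of_parent_i hG hcov hp hpC ht
  | parent_j hp hpC => exact exists_of_parent_j hG hcov hp hpC ht
  | parent_i_false hp hpC hjC => exact exists_of_parent_i_false hG hcov hp hpC hjC ht
  | i_j hiC => exact exists_of_i_j hG hcov hiC ht
  | j_j hjC => exact exists_of_j_j hG hcov hjC ht
  | j_i hjC => exact exists_of_j_i hG hcov hjC ht

theorem exists_reflTransGen_fst {s : V × Bool} {b : V} {e : Bool}
    (hst : ReversalSim G C i j s (b, e)) :
    ∃ e', Relation.ReflTransGen (WalkStep (reverseEdge G i j) C (· ∈ C)) s (b, e') := by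
  cases hst with
  | refl => exact ⟨e, .refl⟩
  | parent_i hp hpC | parent_i_false hp hpC =>
    exact ⟨_, .single (.child (hcov.adj_reverseEdge_of_parent hG hp).2.2.1 hpC)⟩
  | parent_j hp hpC =>
    exact ⟨_, .single (.child (hcov.adj_reverseEdge_of_parent hG hp).2.2.2 hpC)⟩
  | i_j hiC => exact ⟨_, .single (.parent adj_reverseEdge_self (canLeave_false_left.2 hiC))⟩
  | j_j => exact ⟨_, .refl⟩
  | j_i hjC => exact ⟨_, .single (.child adj_reverseEdge_self hjC)⟩

end ReversalSim

theorem CoveredEdge.iSub_reverseEdge {G : EdgeSet V} {i j : V} (hG : IsDAG G)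
    (hcov : CoveredEdge G i j) : ISub (reverseEdge G i j) G := by
  intro A B C hdisj hsep a ha b hb hconn
  have haC : a ∉ C := Finset.disjoint_left.1 hdisj.2.1 ha
  have hab : a ≠ b := fun h => Finset.disjoint_left.1 hdisj.1 ha (h ▸ hb)
  obtain ⟨e, h⟩ := (hG.dConn_iff_reflTransGen haC hab).1 hconn
  obtain ⟨s, hs, hsim⟩ :=
    h.exists_of_simulation (ReversalSim G C i j)
      (fun _ _ _ => ReversalSim.exists_reflTransGen hG hcov)
      (.refl (x := a) (d := false) nofun)
  obtain ⟨e', hs'⟩ := hsim.exists_reflTransGen_fst hG hcov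
  exact hsep a ha b hb
    (((hcov.isDAG_reverseEdge hG).dConn_iff_reflTransGen haC hab).2 ⟨e', hs.trans hs'⟩)

end

/-- reversing `i → j` yields a Markov-equivalent DAG iff `i → j`
is a covered edge. -/
theorem reversal_MEC_iff_covered (G : EdgeSet V) (hG : IsDAG G)
    (i j : V) (hij : (i, j) ∈ G) (H : EdgeSet V)
    (hH : H = insert (j, i) (G.erase (i, j))) :
    ((IsDAG H ∧ MEquiv H G) ↔ parents G i = (parents G j).erase i) := by
  change H = reverseEdge G i j at hH
  subst hH
  constructor
  · rintro ⟨hH, hHG, hGH⟩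
    by_contra hcov
    obtain ⟨k, hk⟩ := not_forall.1 (mt Finset.ext hcov)
    rw [mem_parents, Finset.mem_erase, mem_parents] at hk
    by_cases hki : Adj G k i
    · have hkj : ¬ Adj G k j := fun hkj => hk (iff_of_true hki ⟨hG.ne_of_adj hki, hkj⟩)
      exact not_iSub_of_adj hG hij hki hkj adj_reverseEdge_self
        (adj_reverseEdge_of_adj hki fun h => hG.ne_of_adj hki h.1) hGH
    · obtain ⟨hkne, hkj⟩ : k ≠ i ∧ Adj G k j := by tauto
      refine not_iSub_of_adj hH adj_reverseEdge_self
        (adj_reverseEdge_of_adj hkj fun h => hkne h.1) ?_ hij hkj hHG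
      rw [adj_reverseEdge]
      rintro (⟨rfl, -⟩ | ⟨hki', -⟩)
      exacts [hG.not_adj_self _ hkj, hki hki']
  · intro hpar
    have hcov : CoveredEdge G i j := ⟨hij, hpar⟩
    have hH := hcov.isDAG_reverseEdge hG
    refine ⟨hH, hcov.iSub_reverseEdge hG, ?_⟩
    simpa only [reverseEdge_reverseEdge hG hij] using (hcov.reverse hG).iSub_reverseEdge hH
end
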